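/- arXiv:2003.09927 — 7 statements merged into one kernel-verified Lean document; each statement's English description precedes it below -/
import Mathlib

section
/- Let Γ be a finite simplicial connected graph. Then the Bestvina–Brady group H_Γ is generated by the set of elements {vw⁻¹ : (v,w) is a directed edge of Γ}; that is, the kernel of the homomorphism A_Γ → ℤ sending every vertex generator to 1 equals the subgroup of A_Γ generated by the elements vw⁻¹ over all ordered pairs (v,w) of adjacent vertices. -/
/-!
Let `N` be the subgroup generated by the edge elements `v w⁻¹`. Along a path, `u w⁻¹` telescopes
into a product of edge elements, so connectivity puts every `u w⁻¹` in `N`; and since adjacent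
generators commute, `u⁻¹ w` lies in `N` as well. Conjugating `v w⁻¹` by a generator `x` gives
`(x w⁻¹)(v x⁻¹)`, and by `x⁻¹` gives `(x⁻¹ v)(x⁻¹ w)⁻¹`, so `N` is normal. All generators then
have the same image in `A_Γ ⧸ N`, so the quotient map factors through `A_Γ → ℤ`, whence the
kernel is contained in `N`.
-/

/-- The relator set of the right-angled Artin group of a simple graph:
commutators of adjacent vertices. -/
def raagRels {V : Type*} (G : SimpleGraph V) : Set (FreeGroup V) :=
  {r | ∃ v w : V, G.Adj v w ∧
    r = FreeGroup.of v * FreeGroup.of w * (FreeGroup.of v)⁻¹ * (FreeGroup.of w)⁻¹}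

/-- The right-angled Artin group of a simple graph. -/
abbrev RAAG {V : Type*} (G : SimpleGraph V) : Type _ := PresentedGroup (raagRels G)

/-- The homomorphism `A_Γ → ℤ` sending every vertex generator to `1`. -/
def bbHom {V : Type*} (G : SimpleGraph V) : RAAG G →* Multiplicative ℤ :=
  PresentedGroup.toGroup (f := fun _ : V => Multiplicative.ofAdd (1 : ℤ)) (by
    rintro r ⟨v, w, -, rfl⟩
    simp [mul_comm])

namespace Subgroup

variable {A : Type*} [Group A]

theorem conj_mem_closure_of_forall_conj_mem {S : Set A} {g : A}
    (hS : ∀ s ∈ S, g * s * g⁻¹ ∈ closure S) {n : A} (hn : n ∈ closure S) :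
    g * n * g⁻¹ ∈ closure S := by
  have : closure S ≤ (closure S).comap (MulAut.conj g).toMonoidHom :=
    closure_le _ |>.mpr hS
  simpa using this hn

theorem normal_of_closure_eq_top_of_conj_mem {T : Set A} (hT : closure T = ⊤) (H : Subgroup A)
    (hconj : ∀ t ∈ T, ∀ n ∈ H, t * n * t⁻¹ ∈ H ∧ t⁻¹ * n * t ∈ H) : H.Normal where
  conj_mem n hn g := by
    have hg : g ∈ closure T := hT ▸ mem_top g
    induction hg using closure_induction'' generalizing n with
    | mem t ht => exact (hconj t ht n hn).1
    | inv_mem t ht => simpa using (hconj t ht n hn).2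
    | one => simpa using hn
    | mul x y _ _ hx hy => simpa [mul_assoc] using hx _ (hy n hn)

end Subgroup

namespace BestvinaBrady

variable {V A : Type*} [Group A] {G : SimpleGraph V}

theorem mul_inv_mem_of_reachable {H : Subgroup A} {f : V → A}
    (hadj : ∀ a b, G.Adj a b → f a * (f b)⁻¹ ∈ H) {v w : V} (h : G.Reachable v w) :
    f v * (f w)⁻¹ ∈ H := by
  obtain ⟨p⟩ := h
  induction p with
  | nil => simp
  | @cons a b c hab _ ih =>
    have htele : f a * (f c)⁻¹ = (f a * (f b)⁻¹) * (f b * (f c)⁻¹) := by group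
    exact htele ▸ mul_mem (hadj a b hab) ih

variable (G) in
def edgeSubgroup (ι : V → A) : Subgroup A :=
  Subgroup.closure {x | ∃ v w : V, G.Adj v w ∧ x = ι v * (ι w)⁻¹}

variable {ι : V → A}

theorem mul_inv_mem_edgeSubgroup_of_adj {v w : V} (h : G.Adj v w) :
    ι v * (ι w)⁻¹ ∈ edgeSubgroup G ι :=
  Subgroup.subset_closure ⟨v, w, h, rfl⟩

theorem mul_inv_mem_edgeSubgroup {v w : V} (h : G.Reachable v w) :
    ι v * (ι w)⁻¹ ∈ edgeSubgroup G ι :=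
  mul_inv_mem_of_reachable (fun _ _ => mul_inv_mem_edgeSubgroup_of_adj) h

theorem inv_mul_mem_edgeSubgroup (hcomm : ∀ v w, G.Adj v w → Commute (ι v) (ι w))
    {v w : V} (h : G.Reachable v w) : (ι v)⁻¹ * ι w ∈ edgeSubgroup G ι := by
  simpa using mul_inv_mem_of_reachable (f := fun u => (ι u)⁻¹) (fun a b hab => by
    simpa [(hcomm a b hab).inv_left.eq] using mul_inv_mem_edgeSubgroup_of_adj hab.symm) h

theorem edgeSubgroup_normal (hgen : Subgroup.closure (Set.range ι) = ⊤)
    (hcomm : ∀ v w, G.Adj v w → Commute (ι v) (ι w)) (hconn : G.Connected) :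
    (edgeSubgroup G ι).Normal := by
  refine Subgroup.normal_of_closure_eq_top_of_conj_mem hgen _ ?_
  rintro _ ⟨x, rfl⟩ n hn
  unfold edgeSubgroup at hn ⊢
  constructor
  · refine Subgroup.conj_mem_closure_of_forall_conj_mem ?_ hn
    rintro _ ⟨v, w, hvw, rfl⟩
    have hconj : ι x * (ι v * (ι w)⁻¹) * (ι x)⁻¹ = (ι x * (ι w)⁻¹) * (ι v * (ι x)⁻¹) := by
      rw [(hcomm v w hvw).inv_right.eq]; group
    exact hconj ▸ mul_mem (mul_inv_mem_edgeSubgroup (hconn x w))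
      (mul_inv_mem_edgeSubgroup (hconn v x))
  · nth_rw 2 [← inv_inv (ι x)]
    refine Subgroup.conj_mem_closure_of_forall_conj_mem ?_ hn
    rintro _ ⟨v, w, hvw, rfl⟩
    rw [inv_inv]
    have hconj : (ι x)⁻¹ * (ι v * (ι w)⁻¹) * ι x = ((ι x)⁻¹ * ι v) * ((ι x)⁻¹ * ι w)⁻¹ := by
      group
    exact hconj ▸ mul_mem (inv_mul_mem_edgeSubgroup hcomm (hconn x v))
      (inv_mem (inv_mul_mem_edgeSubgroup hcomm (hconn x w)))

theorem ker_eq_edgeSubgroup (φ : A →* Multiplicative ℤ) (hφ : ∀ v, φ (ι v) = .ofAdd 1)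
    (hgen : Subgroup.closure (Set.range ι) = ⊤)
    (hcomm : ∀ v w, G.Adj v w → Commute (ι v) (ι w)) (hconn : G.Connected) :
    φ.ker = edgeSubgroup G ι := by
  apply le_antisymm
  · have := edgeSubgroup_normal hgen hcomm hconn
    obtain ⟨v₀⟩ := hconn.nonempty
    have hfactor : (zpowersHom _ (ι v₀ : A ⧸ edgeSubgroup G ι)).comp φ =
        QuotientGroup.mk' (edgeSubgroup G ι) := by
      refine MonoidHom.eq_of_eqOn_dense hgen ?_
      rintro _ ⟨v, rfl⟩
      simpa [hφ] using QuotientGroup.eq.mpr (inv_mul_mem_edgeSubgroup hcomm (hconn v₀ v))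
    intro g hg
    rw [← QuotientGroup.eq_one_iff, ← QuotientGroup.mk'_apply, ← hfactor]
    simp [φ.mem_ker.mp hg]
  · refine Subgroup.closure_le _ |>.mpr ?_
    rintro _ ⟨v, w, -, rfl⟩
    simp [hφ]

end BestvinaBrady

theorem raag_commute_of_adj {V : Type*} {G : SimpleGraph V} {v w : V} (h : G.Adj v w) :
    Commute (PresentedGroup.of (rels := raagRels G) v) (PresentedGroup.of w) :=
  commutatorElement_eq_one_iff_commute.mp <| by
    simpa [commutatorElement_def, PresentedGroup.of] using
      PresentedGroup.one_of_mem (rels := raagRels G) ⟨v, w, h, rfl⟩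

theorem bb_ker_eq_closure_edge_gens_general {V : Type*} (G : SimpleGraph V)
    (hconn : G.Connected) :
    (bbHom G).ker = Subgroup.closure
      {x : RAAG G | ∃ v w : V, G.Adj v w ∧
        x = PresentedGroup.of v * (PresentedGroup.of w)⁻¹} :=
  BestvinaBrady.ker_eq_edgeSubgroup (bbHom G) (fun _ => PresentedGroup.toGroup.of _)
    (PresentedGroup.closure_range_of _) (fun _ _ => raag_commute_of_adj) hconn

/-- **Dicks–Leary generation.** For a finite connected simplicial graph `Γ`, the
Bestvina–Brady group `H_Γ` (the kernel of `A_Γ → ℤ` sending every vertex generator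
to `1`) equals the subgroup of `A_Γ` generated by the elements `v * w⁻¹` over all
ordered pairs `(v, w)` of adjacent vertices. -/
theorem bb_ker_eq_closure_edge_gens {V : Type*} [Fintype V] (G : SimpleGraph V)
    (hconn : G.Connected) :
    (bbHom G).ker = Subgroup.closure
      {x : RAAG G | ∃ v w : V, G.Adj v w ∧
        x = PresentedGroup.of v * (PresentedGroup.of w)⁻¹} :=
  bb_ker_eq_closure_edge_gens_general G hconn
end

section
/- Let Γ be a finite simplicial connected graph and let T be a spanning tree of Γ. Then the Bestvina–Brady group H_Γ is generated by the elements vw⁻¹ corresponding to the directed edges (v,w) of T. -/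
/-!
Let `K` be the subgroup generated by the tree edge elements `v w⁻¹`. Telescoping along paths
of `T` puts every `v w⁻¹` into `K`; since adjacent generators of `A_Γ` commute, telescoping
along paths of `Γ` also puts every `v⁻¹ w` into `K`, and these two facts make `K` normal.
In `A_Γ / K` all generators then have the same image `t`, so the quotient map factors
through `A_Γ → ℤ`, `n ↦ tⁿ`, and the kernel of `A_Γ → ℤ` lies in `K`.
-/

namespace Subgroup

variable {G : Type*} [Group G] {s : Set G}

theorem mem_normalizer_closure_of_conj_mem {g : G}
    (hconj : ∀ x ∈ s, g * x * g⁻¹ ∈ closure s)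
    (hconj_inv : ∀ x ∈ s, g⁻¹ * x * g ∈ closure s) :
    g ∈ normalizer (closure s : Set G) := by
  rw [mem_normalizer_iff_map_conj_eq, MonoidHom.map_closure]
  refine le_antisymm (closure_le _ |>.mpr ?_) ?_
  · rintro _ ⟨x, hx, rfl⟩
    exact hconj x hx
  · rw [closure_le, ← MonoidHom.map_closure]
    exact fun x hx ↦ ⟨_, hconj_inv x hx, by simp [mul_assoc]⟩

theorem closure_normal_of_conj_mem {X : Set G} (hX : closure X = ⊤)
    (hconj : ∀ g ∈ X, ∀ x ∈ s, g * x * g⁻¹ ∈ closure s)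
    (hconj_inv : ∀ g ∈ X, ∀ x ∈ s, g⁻¹ * x * g ∈ closure s) :
    (closure s).Normal := by
  rw [← normalizer_eq_top_iff, eq_top_iff, ← hX, closure_le]
  exact fun g hg ↦ mem_normalizer_closure_of_conj_mem (hconj g hg) (hconj_inv g hg)

end Subgroup

theorem SimpleGraph.Preconnected.mul_inv_mem {V M : Type*} [Group M] {G : SimpleGraph V}
    (hG : G.Preconnected) {K : Subgroup M} {f : V → M}
    (hadj : ∀ a b, G.Adj a b → f a * (f b)⁻¹ ∈ K) (v w : V) : f v * (f w)⁻¹ ∈ K := by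
  obtain ⟨p⟩ := hG v w
  induction p with
  | nil => simp
  | @cons a b c hab _ ih =>
    simpa [mul_assoc] using K.mul_mem (hadj a b hab) ih

namespace RAAG

variable {V : Type*} {G : SimpleGraph V}

open PresentedGroup

theorem of_commute {v w : V} (h : G.Adj v w) : Commute (of v : RAAG G) (of w) := by
  have hrel : (PresentedGroup.mk (raagRels G))
      (FreeGroup.of v * FreeGroup.of w * (FreeGroup.of v)⁻¹ * (FreeGroup.of w)⁻¹) = 1 :=
    (QuotientGroup.eq_one_iff _).mpr (Subgroup.subset_normalClosure ⟨v, w, h, rfl⟩)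
  simp only [map_mul, map_inv] at hrel
  exact commutatorElement_eq_one_iff_mul_comm.mp hrel

theorem bbHom_of (v : V) : bbHom G (of v) = Multiplicative.ofAdd 1 :=
  toGroup.of _

theorem ker_bbHom_le (K : Subgroup (RAAG G)) [K.Normal] (v₀ : V)
    (hK : ∀ v, of v * (of v₀)⁻¹ ∈ K) : (bbHom G).ker ≤ K := by
  have hfactor :
      QuotientGroup.mk' K = (zpowersHom _ (QuotientGroup.mk' K (of v₀))).comp (bbHom G) :=
    ext fun v ↦ by
      simpa [bbHom_of, QuotientGroup.eq_iff_div_mem, div_eq_mul_inv] using hK v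
  intro g hg
  rw [← QuotientGroup.eq_one_iff, ← QuotientGroup.mk'_apply, hfactor, MonoidHom.comp_apply,
    MonoidHom.mem_ker.mp hg, map_one]

variable (G) in
def edgeElements (T : SimpleGraph V) : Set (RAAG G) :=
  {x | ∃ v w : V, T.Adj v w ∧ x = of v * (of w)⁻¹}

variable {T : SimpleGraph V}

theorem closure_edgeElements_le_ker : Subgroup.closure (edgeElements G T) ≤ (bbHom G).ker := by
  rw [Subgroup.closure_le]
  rintro _ ⟨v, w, -, rfl⟩
  simp [bbHom_of]

theorem of_mul_inv_of_mem_closure (hT : T.Preconnected) (v w : V) :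
    of v * (of w)⁻¹ ∈ Subgroup.closure (edgeElements G T) :=
  hT.mul_inv_mem (f := of)
    (fun a b hab ↦ Subgroup.subset_closure (k := edgeElements G T) ⟨a, b, hab, rfl⟩) v w

theorem inv_of_mul_of_mem_closure (hG : G.Preconnected) (hT : T.Preconnected) (v w : V) :
    (of v)⁻¹ * of w ∈ Subgroup.closure (edgeElements G T) := by
  simpa using hG.mul_inv_mem (f := fun v ↦ (of v)⁻¹) (fun a b hab ↦ by
    simpa [(of_commute hab).inv_left.eq] using of_mul_inv_of_mem_closure hT b a) v w

theorem closure_edgeElements_normal (hG : G.Preconnected) (hle : T ≤ G) (hT : T.Preconnected) :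
    (Subgroup.closure (edgeElements G T)).Normal := by
  refine Subgroup.closure_normal_of_conj_mem (closure_range_of _) ?_ ?_
  · rintro _ ⟨u, rfl⟩ _ ⟨a, b, hab, rfl⟩
    have hsplit : of u * (of a * (of b)⁻¹) * (of u)⁻¹
        = (of u * (of b)⁻¹) * (of a * (of u)⁻¹ : RAAG G) := by
      rw [(of_commute (hle hab)).inv_right.eq]; group
    rw [hsplit]
    exact mul_mem (of_mul_inv_of_mem_closure hT u b) (of_mul_inv_of_mem_closure hT a u)
  · rintro _ ⟨u, rfl⟩ _ ⟨a, b, hab, rfl⟩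
    have hsplit : (of u)⁻¹ * (of a * (of b)⁻¹) * of u
        = ((of u)⁻¹ * of a) * ((of b)⁻¹ * of u : RAAG G) := by
      group
    rw [hsplit]
    exact mul_mem (inv_of_mul_of_mem_closure hG hT u a) (inv_of_mul_of_mem_closure hG hT b u)

end RAAG

theorem bb_ker_eq_closure_spanning_tree_edge_gens_general {V : Type*}
    (G T : SimpleGraph V) (hconn : G.Connected) (hle : T ≤ G) (hT : T.IsTree) :
    (bbHom G).ker = Subgroup.closure
      {x : RAAG G | ∃ v w : V, T.Adj v w ∧
        x = PresentedGroup.of v * (PresentedGroup.of w)⁻¹} := by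
  change (bbHom G).ker = Subgroup.closure (RAAG.edgeElements G T)
  obtain ⟨v₀⟩ := hconn.nonempty
  have hT' := hT.connected.preconnected
  have := RAAG.closure_edgeElements_normal hconn.preconnected hle hT'
  exact le_antisymm (RAAG.ker_bbHom_le _ v₀ fun v ↦ RAAG.of_mul_inv_of_mem_closure hT' v v₀)
    RAAG.closure_edgeElements_le_ker

/-- For a finite connected simplicial graph `Γ` with a spanning tree `T`, the
Bestvina–Brady group `H_Γ` is generated by the elements `v * w⁻¹` corresponding to
the directed edges `(v, w)` of `T`. -/
theorem bb_ker_eq_closure_spanning_tree_edge_gens {V : Type*} [Fintype V]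
    (G T : SimpleGraph V) (hconn : G.Connected) (hle : T ≤ G) (hT : T.IsTree) :
    (bbHom G).ker = Subgroup.closure
      {x : RAAG G | ∃ v w : V, T.Adj v w ∧
        x = PresentedGroup.of v * (PresentedGroup.of w)⁻¹} :=
  bb_ker_eq_closure_spanning_tree_edge_gens_general G T hconn hle hT
end

section
/- If Γ is a finite simplicial graph that is a tree on n vertices (n ≥ 1), then the Bestvina–Brady group H_Γ is isomorphic to the free group of rank n−1. -/
/-!
Root the tree at `r` and, for `v ≠ r`, let `e_v = v · (parent v)⁻¹ ∈ A_Γ`; the path word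
`e_v e_{parent v} ⋯` telescopes to `v r⁻¹`. Since `v` commutes with its parent, conjugation by `r`
sends `e_v` to `w⁻¹ e_v w`, with `w` the path word of `parent v`. On the free group `F` over
`{v ≠ r}` these formulas define an automorphism `φ`, and `v ↦ (path word of v, 1)` is an
isomorphism `A_Γ ≃* F ⋊[φ] ℤ` carrying `bbHom` to the projection onto `ℤ`. Hence `H_Γ ≅ F`, which
is free of rank `n - 1`.
-/

namespace RAAG

variable {V : Type*} {G : SimpleGraph V}

theorem commute_of_adj {v w : V} (h : G.Adj v w) :
    Commute (PresentedGroup.of (rels := raagRels G) v) (PresentedGroup.of w) := by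
  have hrel : PresentedGroup.mk (raagRels G)
      (FreeGroup.of v * FreeGroup.of w * (FreeGroup.of v)⁻¹ * (FreeGroup.of w)⁻¹) = 1 :=
    (QuotientGroup.eq_one_iff _).mpr (Subgroup.subset_normalClosure ⟨v, w, h, rfl⟩)
  simp only [map_mul, map_inv] at hrel
  exact mul_inv_eq_iff_eq_mul.mp (mul_inv_eq_one.mp hrel)

def lift {H : Type*} [Group H] (f : V → H) (hf : ∀ v w, G.Adj v w → Commute (f v) (f w)) :
    RAAG G →* H :=
  PresentedGroup.toGroup (f := f) (by
    rintro r ⟨v, w, hvw, rfl⟩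
    simp [(hf v w hvw).eq])

@[simp]
theorem lift_of {H : Type*} [Group H] (f : V → H) (hf : ∀ v w, G.Adj v w → Commute (f v) (f w))
    (v : V) : lift f hf (PresentedGroup.of v) = f v :=
  PresentedGroup.toGroup.of _

end RAAG

namespace SemidirectProduct

variable {N G : Type*} [Group N] [Group G] {φ : G →* MulAut N}

theorem commute_mk_of_mul_eq {a b : N} {g : G} (h : a * φ g b = b * φ g a) :
    Commute (⟨a, g⟩ : N ⋊[φ] G) ⟨b, g⟩ := by
  ext <;> simp [h]

noncomputable def kerEquivOfMulEquiv {H : Type*} [Group H] (e : H ≃* N ⋊[φ] G) (f : H →* G)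
    (hf : rightHom.comp e.toMonoidHom = f) : f.ker ≃* N := by
  have hker : f.ker.map e.toMonoidHom = (inl : N →* N ⋊[φ] G).range := by
    rw [← hf, ← MonoidHom.comap_ker, Subgroup.map_comap_eq_self_of_surjective e.surjective,
      range_inl_eq_ker_rightHom]
  exact ((e.subgroupMap f.ker).trans (MulEquiv.subgroupCongr hker)).trans
    (MonoidHom.ofInjective inl_injective).symm

end SemidirectProduct

theorem MonoidHom.map_zpow_mulAut_apply {N H : Type*} [Group N] [Group H] (f : N →* H)
    (φ : MulAut N) (a : H) (hf : ∀ x, f (φ x) = a * f x * a⁻¹) (k : ℤ) (x : N) :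
    f ((φ ^ k) x) = a ^ k * f x * (a ^ k)⁻¹ := by
  induction k using Int.induction_on generalizing x with
  | zero => simp
  | succ k ih =>
    rw [zpow_add_one, MulAut.mul_apply, ih, hf]
    group
  | pred k ih =>
    have hinv : f (φ⁻¹ x) = a⁻¹ * f x * a := calc
      f (φ⁻¹ x) = a⁻¹ * (a * f (φ⁻¹ x) * a⁻¹) * a := by group
      _ = a⁻¹ * f x * a := by rw [← hf, MulAut.apply_inv_self]
    rw [zpow_sub_one, MulAut.mul_apply, ih, hinv]
    group

namespace SimpleGraph.IsTree

open Walk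

variable {V : Type*} {G : SimpleGraph V} (hT : G.IsTree) (r : V)

noncomputable def pathToRoot (v : V) : G.Walk v r := (hT.existsUnique_path v r).choose

theorem isPath_pathToRoot (v : V) : (hT.pathToRoot r v).IsPath :=
  (hT.existsUnique_path v r).choose_spec.1

variable {r} in
theorem eq_pathToRoot {v : V} {p : G.Walk v r} (hp : p.IsPath) : p = hT.pathToRoot r v :=
  (hT.existsUnique_path v r).choose_spec.2 p hp

noncomputable def parent (v : V) : V := (hT.pathToRoot r v).snd

theorem pathToRoot_root : hT.pathToRoot r r = .nil :=
  (hT.eq_pathToRoot .nil).symm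

theorem parent_root : hT.parent r r = r := by
  rw [parent, pathToRoot_root]
  rfl

variable {r}

theorem adj_parent {v : V} (hv : v ≠ r) : G.Adj v (hT.parent r v) :=
  adj_snd (not_nil_of_ne hv)

theorem pathToRoot_eq_cons {v : V} (hv : v ≠ r) :
    hT.pathToRoot r v = .cons (hT.adj_parent hv) (hT.pathToRoot r (hT.parent r v)) := by
  have hnil : ¬ (hT.pathToRoot r v).Nil := not_nil_of_ne hv
  conv_lhs => rw [← cons_tail_eq _ hnil]
  rw [hT.eq_pathToRoot ((hT.isPath_pathToRoot r v).tail)]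
  rfl

theorem length_pathToRoot_parent {v : V} (hv : v ≠ r) :
    (hT.pathToRoot r (hT.parent r v)).length < (hT.pathToRoot r v).length := by
  conv_rhs => rw [hT.pathToRoot_eq_cons hv]
  simp

theorem induction_from_root {p : V → Prop} (root : p r)
    (step : ∀ v, v ≠ r → p (hT.parent r v) → p v) (v : V) : p v := by
  induction h : (hT.pathToRoot r v).length using Nat.strong_induction_on generalizing v with
  | _ n ih =>
    by_cases hv : v = r
    · exact hv ▸ root
    · exact step v hv (ih _ (h ▸ hT.length_pathToRoot_parent hv) _ rfl)

theorem parent_eq_or_parent_eq_of_adj {v w : V} (h : G.Adj v w) :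
    hT.parent r v = w ∨ hT.parent r w = v := by
  classical
  by_cases hv : v ∈ (hT.pathToRoot r w).support
  · right
    have hedge : (hT.pathToRoot r w).takeUntil v hv = .cons h.symm .nil :=
      (hT.existsUnique_path w v).unique ((hT.isPath_pathToRoot r w).takeUntil hv)
        (by simp [h.ne'])
    rw [parent, ← take_spec _ hv, hedge]
    simp
  · left
    rw [parent, ← hT.eq_pathToRoot (((hT.isPath_pathToRoot r w).cons hv : (cons h _).IsPath))]
    simp

variable (r)

noncomputable def edgeToRaag : FreeGroup {u : V // u ≠ r} →* RAAG G :=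
  FreeGroup.lift fun x => PresentedGroup.of x.1 * (PresentedGroup.of (hT.parent r x))⁻¹

@[simp]
theorem edgeToRaag_of (x : {u : V // u ≠ r}) :
    hT.edgeToRaag r (.of x) = PresentedGroup.of x.1 * (PresentedGroup.of (hT.parent r x))⁻¹ :=
  FreeGroup.lift_apply_of

section PathWords

variable [DecidableEq V]

def vertexGen (u : V) : FreeGroup {u : V // u ≠ r} := if h : u = r then 1 else .of ⟨u, h⟩

-- `e_v e_{parent v} ⋯`: the root, last on the path, contributes `1`.
noncomputable def pathWord (v : V) : FreeGroup {u : V // u ≠ r} :=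
  ((hT.pathToRoot r v).support.map (vertexGen r)).prod

noncomputable def revPathWord (v : V) : FreeGroup {u : V // u ≠ r} :=
  ((hT.pathToRoot r v).support.reverse.map (vertexGen r)).prod

@[simp]
theorem pathWord_root : hT.pathWord r r = 1 := by
  simp [pathWord, pathToRoot_root, vertexGen]

@[simp]
theorem revPathWord_root : hT.revPathWord r r = 1 := by
  simp [revPathWord, pathToRoot_root, vertexGen]

variable {r}

theorem pathWord_of_ne {v : V} (hv : v ≠ r) :
    hT.pathWord r v = .of ⟨v, hv⟩ * hT.pathWord r (hT.parent r v) := by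
  rw [pathWord, pathToRoot_eq_cons _ hv]
  simp [pathWord, vertexGen, hv]

theorem revPathWord_of_ne {v : V} (hv : v ≠ r) :
    hT.revPathWord r v = hT.revPathWord r (hT.parent r v) * .of ⟨v, hv⟩ := by
  rw [revPathWord, pathToRoot_eq_cons _ hv]
  simp [revPathWord, vertexGen, hv]

variable (r)

noncomputable def rootConj : FreeGroup {u : V // u ≠ r} →* FreeGroup {u : V // u ≠ r} :=
  FreeGroup.lift fun x =>
    (hT.pathWord r (hT.parent r x))⁻¹ * .of x * hT.pathWord r (hT.parent r x)

noncomputable def rootConjInv : FreeGroup {u : V // u ≠ r} →* FreeGroup {u : V // u ≠ r} :=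
  FreeGroup.lift fun x =>
    hT.revPathWord r (hT.parent r x) * .of x * (hT.revPathWord r (hT.parent r x))⁻¹

@[simp]
theorem rootConj_of (x : {u : V // u ≠ r}) :
    hT.rootConj r (.of x) =
      (hT.pathWord r (hT.parent r x))⁻¹ * .of x * hT.pathWord r (hT.parent r x) :=
  FreeGroup.lift_apply_of

@[simp]
theorem rootConjInv_of (x : {u : V // u ≠ r}) :
    hT.rootConjInv r (.of x) =
      hT.revPathWord r (hT.parent r x) * .of x * (hT.revPathWord r (hT.parent r x))⁻¹ :=
  FreeGroup.lift_apply_of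

theorem rootConjInv_pathWord (v : V) :
    hT.rootConjInv r (hT.pathWord r v) = hT.revPathWord r v := by
  induction v using hT.induction_from_root (r := r) with
  | root => simp
  | step v hv ih => simp [pathWord_of_ne _ hv, revPathWord_of_ne _ hv, ih]

theorem rootConj_revPathWord (v : V) :
    hT.rootConj r (hT.revPathWord r v) = hT.pathWord r v := by
  induction v using hT.induction_from_root (r := r) with
  | root => simp
  | step v hv ih => simp [pathWord_of_ne _ hv, revPathWord_of_ne _ hv, ih, mul_assoc]

noncomputable def rootConjEquiv : FreeGroup {u : V // u ≠ r} ≃* FreeGroup {u : V // u ≠ r} :=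
  MonoidHom.toMulEquiv (hT.rootConj r) (hT.rootConjInv r)
    (FreeGroup.ext_hom _ _ fun x => by simp [rootConjInv_pathWord, mul_assoc])
    (FreeGroup.ext_hom _ _ fun x => by simp [rootConj_revPathWord, mul_assoc])

variable {r} in
theorem pathWord_mul_rootConj_comm_parent {v : V} (hv : v ≠ r) :
    hT.pathWord r v * hT.rootConj r (hT.pathWord r (hT.parent r v)) =
      hT.pathWord r (hT.parent r v) * hT.rootConj r (hT.pathWord r v) := by
  conv_lhs => rw [pathWord_of_ne _ hv]
  conv_rhs => rw [pathWord_of_ne _ hv]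
  simp [mul_assoc]

theorem pathWord_mul_rootConj_comm {v w : V} (h : G.Adj v w) :
    hT.pathWord r v * hT.rootConj r (hT.pathWord r w) =
      hT.pathWord r w * hT.rootConj r (hT.pathWord r v) := by
  rcases hT.parent_eq_or_parent_eq_of_adj (r := r) h with hp | hp
  · have hv : v ≠ r := fun hv => h.ne (hp ▸ hv ▸ (hT.parent_root r).symm)
    exact hp ▸ hT.pathWord_mul_rootConj_comm_parent hv
  · have hw : w ≠ r := fun hw => h.ne (hp ▸ hw ▸ hT.parent_root r)
    exact (hp ▸ hT.pathWord_mul_rootConj_comm_parent hw).symm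

noncomputable def rootAction : Multiplicative ℤ →* MulAut (FreeGroup {u : V // u ≠ r}) :=
  zpowersHom _ (hT.rootConjEquiv r)

noncomputable def raagToSemidirect :
    RAAG G →* FreeGroup {u : V // u ≠ r} ⋊[hT.rootAction r] Multiplicative ℤ :=
  RAAG.lift (fun v => ⟨hT.pathWord r v, .ofAdd 1⟩) fun _ _ h =>
    SemidirectProduct.commute_mk_of_mul_eq (hT.pathWord_mul_rootConj_comm r h)

theorem edgeToRaag_pathWord (v : V) :
    hT.edgeToRaag r (hT.pathWord r v) = PresentedGroup.of v * (PresentedGroup.of r)⁻¹ := by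
  induction v using hT.induction_from_root (r := r) with
  | root => simp
  | step v hv ih => simp [pathWord_of_ne _ hv, ih, mul_assoc]

theorem edgeToRaag_rootConj (x : FreeGroup {u : V // u ≠ r}) :
    hT.edgeToRaag r (hT.rootConj r x) =
      PresentedGroup.of r * hT.edgeToRaag r x * (PresentedGroup.of r)⁻¹ := by
  suffices (hT.edgeToRaag r).comp (hT.rootConj r) =
      (MulAut.conj (PresentedGroup.of r)).toMonoidHom.comp (hT.edgeToRaag r) from
    DFunLike.congr_fun this x
  refine FreeGroup.ext_hom _ _ fun x => ?_
  have hc := (RAAG.commute_of_adj (hT.adj_parent x.2)).symm.inv_left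
  simp [edgeToRaag_pathWord, mul_assoc, hc.left_comm]

noncomputable def semidirectToRaag :
    FreeGroup {u : V // u ≠ r} ⋊[hT.rootAction r] Multiplicative ℤ →* RAAG G :=
  SemidirectProduct.lift (hT.edgeToRaag r) (zpowersHom _ (PresentedGroup.of r)) fun z =>
    MonoidHom.ext fun x =>
      (hT.edgeToRaag r).map_zpow_mulAut_apply (hT.rootConjEquiv r) _ (hT.edgeToRaag_rootConj r)
        z.toAdd x

theorem semidirectToRaag_comp_raagToSemidirect :
    (hT.semidirectToRaag r).comp (hT.raagToSemidirect r) = MonoidHom.id _ :=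
  PresentedGroup.ext fun v => by
    simp [raagToSemidirect, semidirectToRaag, SemidirectProduct.mk_eq_inl_mul_inr,
      edgeToRaag_pathWord]

theorem raagToSemidirect_comp_semidirectToRaag :
    (hT.raagToSemidirect r).comp (hT.semidirectToRaag r) = MonoidHom.id _ := by
  refine SemidirectProduct.hom_ext (FreeGroup.ext_hom _ _ fun x => ?_) (MonoidHom.ext_mint ?_)
  · ext <;> simp [raagToSemidirect, semidirectToRaag, pathWord_of_ne _ x.2]
  · ext <;> simp [raagToSemidirect, semidirectToRaag]

noncomputable def raagEquivSemidirect :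
    RAAG G ≃* FreeGroup {u : V // u ≠ r} ⋊[hT.rootAction r] Multiplicative ℤ :=
  MonoidHom.toMulEquiv _ _ (hT.semidirectToRaag_comp_raagToSemidirect r)
    (hT.raagToSemidirect_comp_semidirectToRaag r)

theorem rightHom_comp_raagEquivSemidirect :
    SemidirectProduct.rightHom.comp (hT.raagEquivSemidirect r).toMonoidHom = bbHom G :=
  PresentedGroup.ext fun v => by
    simp [raagEquivSemidirect, raagToSemidirect, bbHom]

end PathWords

end SimpleGraph.IsTree

theorem bb_of_tree_iso_freeGroup_general {V : Type*} [Fintype V] (G : SimpleGraph V)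
    (hT : G.IsTree) (n : ℕ) (hcard : Fintype.card V = n) :
    Nonempty ((bbHom G).ker ≃* FreeGroup (Fin (n - 1))) := by
  classical
  obtain ⟨r⟩ := hT.connected.nonempty
  have hcard' : Fintype.card {u : V // u ≠ r} = n - 1 := by
    simp [Fintype.card_subtype_compl, hcard]
  exact ⟨(SemidirectProduct.kerEquivOfMulEquiv _ _ (hT.rightHom_comp_raagEquivSemidirect r)).trans
    (FreeGroup.freeGroupCongr (Fintype.equivFinOfCardEq hcard'))⟩

/-- If `Γ` is a tree on `n ≥ 1` vertices, then the Bestvina–Brady group `H_Γ` is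
isomorphic to the free group of rank `n - 1`. -/
theorem bb_of_tree_iso_freeGroup {V : Type*} [Fintype V] (G : SimpleGraph V)
    (hT : G.IsTree) (n : ℕ) (hn : 1 ≤ n) (hcard : Fintype.card V = n) :
    Nonempty ((bbHom G).ker ≃* FreeGroup (Fin (n - 1))) :=
  bb_of_tree_iso_freeGroup_general G hT n hcard
end

section
/- Let G be a group acting on a tree T by graph automorphisms. If g₁, g₂ ∈ G are commuting elements each of which fixes some vertex of T, then Fix(g₁) ∩ Fix(g₂) ≠ ∅ (g₁ and g₂ have a common fixed vertex), and the product g₁g₂ fixes a vertex of T. -/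
/-!
The fixed-point set of a tree automorphism is convex: the image of the unique path between two
fixed vertices is again a path between them, hence the same path. In a tree, a nonempty convex
set `S` has a unique vertex nearest to any given vertex `x`. Since `g₁` and `g₂` commute, `g₂`
preserves `Fix(g₁)`; as an isometry fixing some `x`, it maps the vertex of `Fix(g₁)` nearest to
`x` to a vertex of `Fix(g₁)` equally near, hence fixes it.
-/

open Function Set

namespace SimpleGraph

variable {V W : Type*} {G : SimpleGraph V}

def IsPathConvex (G : SimpleGraph V) (S : Set V) : Prop :=
  ∀ ⦃u v : V⦄ (p : G.Walk u v), p.IsPath → u ∈ S → v ∈ S → ∀ y ∈ p.support, y ∈ S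

lemma Walk.dist_le_of_mem_support {u v w : V} (p : G.Walk u v) (hw : w ∈ p.support) :
    G.dist u w ≤ p.length := by
  classical
  exact (dist_le _).trans (p.length_takeUntil_le_length hw)

lemma Reachable.dist_map_le {G' : SimpleGraph W} (f : G →g G') {u v : V}
    (h : G.Reachable u v) : G'.dist (f u) (f v) ≤ G.dist u v := by
  obtain ⟨p, hp⟩ := h.exists_walk_length_eq_dist
  calc G'.dist (f u) (f v) ≤ (p.map f).length := dist_le _
    _ = G.dist u v := by rw [Walk.length_map, hp]

lemma Iso.dist_eq {G' : SimpleGraph W} (f : G ≃g G') (u v : V) :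
    G'.dist (f u) (f v) = G.dist u v := by
  by_cases h : G.Reachable u v
  · refine le_antisymm (h.dist_map_le f.toHom) ?_
    simpa using ((Iso.reachable_iff (φ := f)).mpr h).dist_map_le f.symm.toHom
  · rw [dist_eq_zero_of_not_reachable h,
      dist_eq_zero_of_not_reachable (mt Iso.reachable_iff.mp h)]

lemma IsAcyclic.isPathConvex_fixedPoints (hG : G.IsAcyclic) (f : G ≃g G) :
    G.IsPathConvex (fixedPoints f) := by
  intro u v p hp (hu : f.toHom u = u) (hv : f.toHom v = v) y hy
  have hmap : (p.map f.toHom).copy hu hv = p :=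
    congrArg Subtype.val <| (hG.subsingleton_path u v).elim
      ⟨_, (Walk.isPath_copy _ _ _).mpr (hp.map f.injective)⟩ ⟨p, hp⟩
  have hsupport : p.support.map f.toHom = p.support := by
    rw [← Walk.support_map, ← Walk.support_copy _ hu hv, hmap]
  exact List.map_eq_map_iff.mp (hsupport.trans (List.map_id _).symm) y hy

lemma IsTree.eq_of_dist_eq_of_forall_dist_le (hG : G.IsTree) {S : Set V}
    (hS : G.IsPathConvex S) {x p q : V} (hp : p ∈ S) (hq : q ∈ S)
    (hpq : G.dist x p = G.dist x q) (hmin : ∀ r ∈ S, G.dist x p ≤ G.dist x r) : p = q := by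
  classical
  by_contra hne
  obtain ⟨P, hP⟩ := hG.connected.exists_walk_length_eq_dist x p
  obtain ⟨Q, hQ⟩ := hG.connected.exists_walk_length_eq_dist x q
  -- the path from `p` to `q` runs along `P` and `Q`, so its second vertex is a neighbour of `p`
  -- in `S` no farther from `x` than `p`; but in a tree neighbours are at different distances
  set R := (P.reverse.append Q).bypass
  have hadj : G.Adj p R.snd := R.adj_snd (Walk.not_nil_of_ne hne)
  have hsnd_mem : R.snd ∈ S := hS R (Walk.bypass_isPath _) hp hq _ (R.getVert_mem_support 1)
  have hsnd_le : G.dist x R.snd ≤ G.dist x p := by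
    have : R.snd ∈ (P.reverse.append Q).support :=
      Walk.support_bypass_subset_support _ (R.getVert_mem_support 1)
    rw [Walk.mem_support_append_iff, Walk.support_reverse, List.mem_reverse] at this
    rcases this with hP' | hQ'
    · exact hP ▸ P.dist_le_of_mem_support hP'
    · exact hpq ▸ hQ ▸ Q.dist_le_of_mem_support hQ'
  exact hG.dist_ne_of_adj x hadj (le_antisymm hsnd_le (hmin _ hsnd_mem)).symm

lemma IsTree.exists_fixed_of_mapsTo (hG : G.IsTree) {S : Set V} (hS : G.IsPathConvex S)
    (hne : S.Nonempty) (f : G ≃g G) (hf : MapsTo f S S) {x : V} (hx : f x = x) :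
    ∃ p ∈ S, f p = p := by
  obtain ⟨p, hp, hmin⟩ : ∃ p ∈ S, ∀ r ∈ S, G.dist x p ≤ G.dist x r :=
    ⟨argminOn (G.dist x) S hne, argminOn_mem _ S hne, fun r hr ↦ argminOn_le _ S hr⟩
  refine ⟨p, hp, (hG.eq_of_dist_eq_of_forall_dist_le hS hp (hf hp) ?_ hmin).symm⟩
  rw [← f.dist_eq x p, hx]

end SimpleGraph

def smulIso {G X : Type*} [Group G] [MulAction G X] (T : SimpleGraph X)
    (hact : ∀ (g : G) (v w : X), T.Adj v w → T.Adj (g • v) (g • w)) (g : G) : T ≃g T where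
  toEquiv := MulAction.toPerm g
  map_rel_iff' := ⟨fun h ↦ by simpa using hact g⁻¹ _ _ h, hact g _ _⟩

/-- Let a group `G` act on a tree `T` by graph automorphisms. If `g₁, g₂ ∈ G` commute
and each fixes some vertex of `T`, then they have a common fixed vertex, and the
product `g₁ * g₂` fixes a vertex of `T`. -/
theorem commuting_elliptic_common_fixed_point {G X : Type*} [Group G] [MulAction G X]
    (T : SimpleGraph X) (hT : T.IsTree)
    (hact : ∀ (g : G) (v w : X), T.Adj v w → T.Adj (g • v) (g • w))
    (g₁ g₂ : G) (hcomm : Commute g₁ g₂)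
    (h₁ : ∃ x : X, g₁ • x = x) (h₂ : ∃ x : X, g₂ • x = x) :
    (∃ x : X, g₁ • x = x ∧ g₂ • x = x) ∧ (∃ x : X, (g₁ * g₂) • x = x) := by
  obtain ⟨x, hx⟩ := h₂
  have hmaps : MapsTo (smulIso T hact g₂) (fixedPoints (smulIso T hact g₁))
      (fixedPoints (smulIso T hact g₁)) := fun y (hy : g₁ • y = y) ↦ by
    change g₁ • g₂ • y = g₂ • y
    rw [smul_smul, hcomm.eq, mul_smul, hy]
  obtain ⟨p, hp₁ : g₁ • p = p, hp₂ : g₂ • p = p⟩ := hT.exists_fixed_of_mapsTo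
    (hT.isAcyclic.isPathConvex_fixedPoints (smulIso T hact g₁)) h₁ _ hmaps hx
  exact ⟨⟨p, hp₁, hp₂⟩, p, by rw [mul_smul, hp₂, hp₁]⟩
end

section
/- Let Γ be a finite simplicial connected graph containing a separating clique K: the vertex set of Γ∖K is the disjoint union of two nonempty sets V₁ and V₂ with no edges of Γ joining V₁ to V₂, and K is a nonempty set of pairwise adjacent vertices. Let Γ₁ and Γ₂ be the induced subgraphs of Γ on V₁ ∪ K and V₂ ∪ K, respectively. Then the Bestvina–Brady group H_Γ is isomorphic to the amalgamated free product H_{Γ₁} ∗_{H_K} H_{Γ₂}, i.e., the pushout of the diagram H_{Γ₁} ← H_K → H_{Γ₂}, where the two homomorphisms are the restrictions to kernels of the natural homomorphisms A_K → A_{Γ₁} and A_K → A_{Γ₂} induced by the inclusions of induced subgraphs (sending each vertex generator to itself). -/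
lemma raag_commute {V : Type*} {G : SimpleGraph V} {v w : V} (h : G.Adj v w) :
    (PresentedGroup.of v : RAAG G) * PresentedGroup.of w =
      PresentedGroup.of w * PresentedGroup.of v := by
  have hmem : (FreeGroup.of v * FreeGroup.of w * (FreeGroup.of v)⁻¹ * (FreeGroup.of w)⁻¹ :
      FreeGroup V) ∈ Subgroup.normalClosure (raagRels G) :=
    Subgroup.subset_normalClosure ⟨v, w, h, rfl⟩
  open scoped commutatorElement in
  have h1 : ⁅(PresentedGroup.of v : RAAG G), (PresentedGroup.of w : RAAG G)⁆ = 1 := by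
    have h0 := (QuotientGroup.eq_one_iff _).mpr hmem
    rw [commutatorElement_def]
    exact h0
  exact commutatorElement_eq_one_iff_mul_comm.mp h1

/-- The homomorphism `A_{Γ[S]} → A_{Γ[S']}` induced by an inclusion `S ⊆ S'` of
induced subgraphs, sending each vertex generator to itself. -/
def inclHom {V : Type*} (G : SimpleGraph V) {S S' : Set V} (h : S ⊆ S') :
    RAAG (G.induce S) →* RAAG (G.induce S') :=
  PresentedGroup.toGroup
    (f := fun x : S => (PresentedGroup.of (Set.inclusion h x) : RAAG (G.induce S'))) (by
    rintro r ⟨v, w, hadj, rfl⟩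
    simp only [map_mul, map_inv, FreeGroup.lift_apply_of]
    have hadj' : (G.induce S').Adj (Set.inclusion h v) (Set.inclusion h w) := hadj
    rw [mul_inv_eq_one, mul_inv_eq_iff_eq_mul]
    exact raag_commute hadj')

@[simp]
lemma inclHom_of {V : Type*} (G : SimpleGraph V) {S S' : Set V} (h : S ⊆ S') (x : S) :
    inclHom G h (PresentedGroup.of x) = PresentedGroup.of (Set.inclusion h x) :=
  PresentedGroup.toGroup.of _

lemma bbHom_inclHom {V : Type*} (G : SimpleGraph V) {S S' : Set V} (h : S ⊆ S')
    (x : RAAG (G.induce S)) :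
    bbHom (G.induce S') (inclHom G h x) = bbHom (G.induce S) x := by
  have : (bbHom (G.induce S')).comp (inclHom G h) = bbHom (G.induce S) := by
    apply PresentedGroup.ext
    intro y
    simp [bbHom, inclHom]
  exact DFunLike.congr_fun this x

/-- The restriction of `inclHom` to Bestvina–Brady groups: `H_{Γ[S]} → H_{Γ[S']}`. -/
def bbInclHom {V : Type*} (G : SimpleGraph V) {S S' : Set V} (h : S ⊆ S') :
    (bbHom (G.induce S)).ker →* (bbHom (G.induce S')).ker :=
  MonoidHom.codRestrict ((inclHom G h).comp (Subgroup.subtype _)) _ (fun x => by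
    rw [MonoidHom.mem_ker, MonoidHom.comp_apply, Subgroup.coe_subtype, bbHom_inclHom G h]
    exact MonoidHom.mem_ker.mp x.2)
/-- A two-member family of types indexed by `Bool`. -/
def boolFam (T₁ T₂ : Type u) : Bool → Type u := fun b => bif b then T₁ else T₂

instance boolFamGroup {T₁ T₂ : Type u} [Group T₁] [Group T₂] :
    ∀ b, Group (boolFam T₁ T₂ b)
  | true => ‹Group T₁›
  | false => ‹Group T₂›

/-- A pair of homomorphisms out of `H`, as a `Bool`-indexed family. -/
def boolHoms {H : Type*} [Group H] {T₁ T₂ : Type u} [Group T₁] [Group T₂]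
    (f₁ : H →* T₁) (f₂ : H →* T₂) : ∀ b, H →* boolFam T₁ T₂ b
  | true => f₁
  | false => f₂

open Monoid Multiplicative Function

universe v

theorem Function.Semiconj.mulAut_zpow {M N : Type*} [Group M] [Group N] {f : M → N}
    {a : MulAut M} {b : MulAut N} (h : Semiconj f a b) (n : ℤ) :
    Semiconj f ⇑(a ^ n) ⇑(b ^ n) := by
  induction n using Int.induction_on with
  | zero => exact fun _ => rfl
  | succ n ih => rw [zpow_add_one, zpow_add_one]; exact ih.comp_right h
  | pred n ih =>
    rw [zpow_sub_one, zpow_sub_one]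
    exact ih.comp_right (h.inverses_right a.apply_symm_apply b.symm_apply_apply)

section SplitOverInt

variable {A P : Type*} [Group A] [Group P] {χ : A →* Multiplicative ℤ} {t : A}

def kerPart (ht : χ t = ofAdd 1) (g : A) : χ.ker :=
  ⟨g * t ^ (-(χ g).toAdd), by simp [MonoidHom.mem_ker, ht, ← ofAdd_zsmul]⟩

@[simp]
lemma coe_kerPart (ht : χ t = ofAdd 1) (g : A) :
    (kerPart ht g : A) = g * t ^ (-(χ g).toAdd) := rfl

@[simp]
lemma kerPart_coe (ht : χ t = ofAdd 1) (x : χ.ker) : kerPart ht x = x := by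
  ext; simp [MonoidHom.mem_ker.mp x.2]

@[simp]
lemma kerPart_one (ht : χ t = ofAdd 1) : kerPart ht 1 = 1 := by
  ext; simp

lemma kerPart_mul (ht : χ t = ofAdd 1) (g g' : A) :
    kerPart ht (g * g') = kerPart ht g * MulAut.conjNormal (t ^ (χ g).toAdd) (kerPart ht g') := by
  ext
  simp only [coe_kerPart, Subgroup.coe_mul, MulAut.conjNormal_apply, map_mul, toAdd_mul,
    neg_add, zpow_add]
  group

variable (β : MulAut P)

/-- `g ↦ (g t^{-χ g}, χ g)` identifies `A` with `ker χ ⋊ ℤ`, `ℤ` acting by conjugation by `t`. -/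
def liftOfKer (ht : χ t = ofAdd 1) (j : χ.ker →* P) (hj : Semiconj j (MulAut.conjNormal t) β) :
    A →* P ⋊[zpowersHom (MulAut P) β] Multiplicative ℤ where
  toFun g := ⟨j (kerPart ht g), χ g⟩
  map_one' := by ext <;> simp
  map_mul' g g' := by
    ext
    · simp [kerPart_mul, (hj.mulAut_zpow _).eq]
    · simp

@[simp]
lemma liftOfKer_apply (ht : χ t = ofAdd 1) (j : χ.ker →* P)
    (hj : Semiconj j (MulAut.conjNormal t) β) (g : A) :
    liftOfKer β ht j hj g = ⟨j (kerPart ht g), χ g⟩ := rfl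

def liftZPowers {B : Type*} [Group B] (f : P →* B) (s : B) (hf : Semiconj f β (MulAut.conj s)) :
    P ⋊[zpowersHom (MulAut P) β] Multiplicative ℤ →* B :=
  SemidirectProduct.lift f (zpowersHom B s) fun n => by
    ext x
    simpa [map_zpow] using hf.mulAut_zpow n.toAdd x

@[simp]
lemma liftZPowers_apply {B : Type*} [Group B] (f : P →* B) (s : B)
    (hf : Semiconj f β (MulAut.conj s)) (q : P ⋊[zpowersHom (MulAut P) β] Multiplicative ℤ) :
    liftZPowers β f s hf q = f q.left * s ^ q.right.toAdd := rfl

lemma liftZPowers_liftOfKer {B : Type*} [Group B] (f : P →* B) (s : B)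
    (hf : Semiconj f β (MulAut.conj s)) (ht : χ t = ofAdd 1) (j : χ.ker →* P)
    (hj : Semiconj j (MulAut.conjNormal t) β) (F : A →* B) (hF : ∀ x, f (j x) = F x)
    (hFt : F t = s) (g : A) : liftZPowers β f s hf (liftOfKer β ht j hj g) = F g := by
  simp [hF, ← hFt, ← map_zpow, ← map_mul]

lemma right_eq_one_of_mem_ker {N G B : Type*} [Group N] [Group G] [Group B] {φ : G →* MulAut N}
    (Θ : B →* N ⋊[φ] G) {χ : B →* G} (h : SemidirectProduct.rightHom.comp Θ = χ) (x : χ.ker) :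
    (Θ x).right = 1 := by
  rw [← SemidirectProduct.rightHom_eq_right, ← MonoidHom.comp_apply, h]
  exact x.2

def leftOnKer {N G B : Type*} [Group N] [Group G] [Group B] {φ : G →* MulAut N}
    (Θ : B →* N ⋊[φ] G) {χ : B →* G} (h : SemidirectProduct.rightHom.comp Θ = χ) :
    χ.ker →* N where
  toFun x := (Θ x).left
  map_one' := by simp
  map_mul' x y := by simp [SemidirectProduct.mul_left, right_eq_one_of_mem_ker Θ h x]

@[simp]
lemma leftOnKer_apply {N G B : Type*} [Group N] [Group G] [Group B] {φ : G →* MulAut N}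
    (Θ : B →* N ⋊[φ] G) {χ : B →* G} (h : SemidirectProduct.rightHom.comp Θ = χ) (x : χ.ker) :
    leftOnKer Θ h x = (Θ x).left := rfl

lemma inl_leftOnKer {N G B : Type*} [Group N] [Group G] [Group B] {φ : G →* MulAut N}
    (Θ : B →* N ⋊[φ] G) {χ : B →* G} (h : SemidirectProduct.rightHom.comp Θ = χ) (x : χ.ker) :
    SemidirectProduct.inl (leftOnKer Θ h x) = Θ x := by
  ext <;> simp [right_eq_one_of_mem_ker Θ h x]

end SplitOverInt

section BinaryPushout

variable {H M : Type*} {T₁ T₂ : Type v} [Group H] [Group M] [Group T₁] [Group T₂]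
  (f₁ : H →* T₁) (f₂ : H →* T₂)

def boolFamLift (g₁ : T₁ →* M) (g₂ : T₂ →* M) : ∀ b, boolFam T₁ T₂ b →* M
  | true => g₁
  | false => g₂

def pushoutInl : T₁ →* PushoutI (boolHoms f₁ f₂) := PushoutI.of (φ := boolHoms f₁ f₂) true

def pushoutInr : T₂ →* PushoutI (boolHoms f₁ f₂) := PushoutI.of (φ := boolHoms f₁ f₂) false

lemma pushoutInl_apply (x : H) : pushoutInl f₁ f₂ (f₁ x) = PushoutI.base _ x :=
  PushoutI.of_apply_eq_base _ true x

lemma pushoutInr_apply (x : H) : pushoutInr f₁ f₂ (f₂ x) = PushoutI.base _ x :=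
  PushoutI.of_apply_eq_base _ false x

variable {f₁ f₂}

def pushoutLift (g₁ : T₁ →* M) (g₂ : T₂ →* M) (h : g₁.comp f₁ = g₂.comp f₂) :
    PushoutI (boolHoms f₁ f₂) →* M :=
  PushoutI.lift (boolFamLift g₁ g₂) (g₁.comp f₁) (by rintro (_ | _) <;> [exact h.symm; rfl])

@[simp]
lemma pushoutLift_inl (g₁ : T₁ →* M) (g₂ : T₂ →* M) (h : g₁.comp f₁ = g₂.comp f₂) (x : T₁) :
    pushoutLift g₁ g₂ h (pushoutInl f₁ f₂ x) = g₁ x :=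
  PushoutI.lift_of _ _ _ _

@[simp]
lemma pushoutLift_inr (g₁ : T₁ →* M) (g₂ : T₂ →* M) (h : g₁.comp f₁ = g₂.comp f₂) (x : T₂) :
    pushoutLift g₁ g₂ h (pushoutInr f₁ f₂ x) = g₂ x :=
  PushoutI.lift_of _ _ _ _

lemma pushout_hom_ext {F F' : PushoutI (boolHoms f₁ f₂) →* M}
    (h₁ : ∀ x, F (pushoutInl f₁ f₂ x) = F' (pushoutInl f₁ f₂ x))
    (h₂ : ∀ x, F (pushoutInr f₁ f₂ x) = F' (pushoutInr f₁ f₂ x)) : F = F' :=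
  PushoutI.hom_ext_nonempty fun b => by
    cases b
    exacts [MonoidHom.ext h₂, MonoidHom.ext h₁]

def pushoutAut (a : MulAut H) (a₁ : MulAut T₁) (a₂ : MulAut T₂) (h₁ : Semiconj f₁ a a₁)
    (h₂ : Semiconj f₂ a a₂) : MulAut (PushoutI (boolHoms f₁ f₂)) :=
  have h₁' := h₁.inverses_right a.apply_symm_apply a₁.symm_apply_apply
  have h₂' := h₂.inverses_right a.apply_symm_apply a₂.symm_apply_apply
  MonoidHom.toMulEquiv
    (pushoutLift ((pushoutInl f₁ f₂).comp a₁.toMonoidHom) ((pushoutInr f₁ f₂).comp a₂.toMonoidHom)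
      (by ext x; simp [← h₁.eq, ← h₂.eq, pushoutInl_apply, pushoutInr_apply]))
    (pushoutLift ((pushoutInl f₁ f₂).comp a₁.symm.toMonoidHom)
      ((pushoutInr f₁ f₂).comp a₂.symm.toMonoidHom)
      (by ext x; simp [← h₁'.eq, ← h₂'.eq, pushoutInl_apply, pushoutInr_apply]))
    (pushout_hom_ext (by simp) (by simp)) (pushout_hom_ext (by simp) (by simp))

@[simp]
lemma pushoutAut_inl (a : MulAut H) (a₁ : MulAut T₁) (a₂ : MulAut T₂) (h₁ : Semiconj f₁ a a₁)
    (h₂ : Semiconj f₂ a a₂) (x : T₁) :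
    pushoutAut a a₁ a₂ h₁ h₂ (pushoutInl f₁ f₂ x) = pushoutInl f₁ f₂ (a₁ x) := by
  simp [pushoutAut]

@[simp]
lemma pushoutAut_inr (a : MulAut H) (a₁ : MulAut T₁) (a₂ : MulAut T₂) (h₁ : Semiconj f₁ a a₁)
    (h₂ : Semiconj f₂ a a₂) (x : T₂) :
    pushoutAut a a₁ a₂ h₁ h₂ (pushoutInr f₁ f₂ x) = pushoutInr f₁ f₂ (a₂ x) := by
  simp [pushoutAut]

end BinaryPushout

section RightAngledArtin

variable {V W M : Type*} [Group M] {G : SimpleGraph V} {G' : SimpleGraph W}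

def raagLift (f : V → M) (hf : ∀ ⦃v w⦄, G.Adj v w → Commute (f v) (f w)) : RAAG G →* M :=
  PresentedGroup.toGroup (f := f) (by
    rintro r ⟨v, w, hvw, rfl⟩
    simp [(hf hvw).eq])

@[simp]
lemma raagLift_of (f : V → M) (hf : ∀ ⦃v w⦄, G.Adj v w → Commute (f v) (f w)) (v : V) :
    raagLift f hf (PresentedGroup.of v) = f v :=
  PresentedGroup.toGroup.of _

def raagMap (f : G →g G') : RAAG G →* RAAG G' :=
  raagLift (fun v => PresentedGroup.of (f v)) fun _ _ h => raag_commute (f.map_adj h)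

@[simp]
lemma raagMap_of (f : G →g G') (v : V) :
    raagMap f (PresentedGroup.of v) = PresentedGroup.of (f v) :=
  raagLift_of _ _ v

variable (G) in
@[simp]
lemma bbHom_of (v : V) : bbHom G (PresentedGroup.of v) = ofAdd 1 :=
  PresentedGroup.toGroup.of _

@[simp]
lemma bbHom_raagMap (f : G →g G') (g : RAAG G) : bbHom G' (raagMap f g) = bbHom G g :=
  DFunLike.congr_fun (PresentedGroup.ext (φ := (bbHom G').comp (raagMap f)) (ψ := bbHom G)
    (by simp)) g

def bbMap (f : G →g G') : (bbHom G).ker →* (bbHom G').ker :=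
  MonoidHom.codRestrict ((raagMap f).comp (Subgroup.subtype _)) _ fun x => by
    simpa using MonoidHom.mem_ker.mp x.2

@[simp]
lemma coe_bbMap (f : G →g G') (x : (bbHom G).ker) : (bbMap f x : RAAG G') = raagMap f x := rfl

@[simp]
lemma coe_bbInclHom {S S' : Set V} (h : S ⊆ S') (x : (bbHom (G.induce S)).ker) :
    (bbInclHom G h x : RAAG (G.induce S')) = inclHom G h x := rfl

variable (G) in
lemma raagMap_induce_inclHom {S S' : Set V} (h : S ⊆ S') (g : RAAG (G.induce S)) :
    raagMap (SimpleGraph.Embedding.induce S').toHom (inclHom G h g) =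
      raagMap (SimpleGraph.Embedding.induce S).toHom g :=
  DFunLike.congr_fun (PresentedGroup.ext
    (φ := (raagMap (SimpleGraph.Embedding.induce S').toHom).comp (inclHom G h))
    (ψ := raagMap (SimpleGraph.Embedding.induce S).toHom) (by simp)) g

variable (G) in
lemma bbInclHom_conjNormal {S S' : Set V} (h : S ⊆ S') {k : V} (hk : k ∈ S) :
    Semiconj (bbInclHom G h) (MulAut.conjNormal (PresentedGroup.of ⟨k, hk⟩))
      (MulAut.conjNormal (PresentedGroup.of ⟨k, h hk⟩)) := fun x =>
  Subtype.ext (by simp [bbInclHom, MulAut.conjNormal_apply, Set.inclusion])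

end RightAngledArtin

section SeparatingSet

variable {α : Type*} {K V₁ V₂ : Set α} {v : α}

lemma mem_union_of_notMem_union (hcover : Kᶜ ⊆ V₁ ∪ V₂) (h : v ∉ V₁ ∪ K) : v ∈ V₂ ∪ K := by
  have := @hcover v
  simp only [Set.mem_union, Set.mem_compl_iff] at *
  tauto

lemma mem_of_mem_union_of_mem_union (hdisj : Disjoint V₁ V₂) (h₁ : v ∈ V₁ ∪ K)
    (h₂ : v ∈ V₂ ∪ K) : v ∈ K := by
  have : v ∈ V₁ → v ∉ V₂ := fun h => Set.disjoint_left.mp hdisj h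
  simp only [Set.mem_union] at *
  tauto

lemma SimpleGraph.Adj.mem_sides {G : SimpleGraph α} (hcover : Kᶜ ⊆ V₁ ∪ V₂)
    (hnoedge : ∀ a ∈ V₁, ∀ b ∈ V₂, ¬ G.Adj a b) {w : α} (hvw : G.Adj v w) :
    (v ∈ V₁ ∪ K ∧ w ∈ V₁ ∪ K) ∨ (v ∈ V₂ ∪ K ∧ w ∈ V₂ ∪ K) := by
  have := @hcover v
  have := @hcover w
  have := hnoedge v
  have := hnoedge w
  have := hvw.symm
  simp only [Set.mem_union, Set.mem_compl_iff] at *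
  tauto

end SeparatingSet

abbrev BBAmalgam {V : Type*} (G : SimpleGraph V) (K V₁ V₂ : Set V) : Type _ :=
  PushoutI (boolHoms
    (bbInclHom G (Set.subset_union_right : K ⊆ V₁ ∪ K))
    (bbInclHom G (Set.subset_union_right : K ⊆ V₂ ∪ K)))

namespace BBAmalgam

open SimpleGraph

variable {V : Type*} (G : SimpleGraph V) {K : Set V} (V₁ V₂ : Set V) {k₀ : V} (hk₀ : k₀ ∈ K)

def conj : MulAut (BBAmalgam G K V₁ V₂) :=
  pushoutAut (MulAut.conjNormal (PresentedGroup.of ⟨k₀, hk₀⟩))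
    (MulAut.conjNormal (PresentedGroup.of ⟨k₀, Set.mem_union_right V₁ hk₀⟩))
    (MulAut.conjNormal (PresentedGroup.of ⟨k₀, Set.mem_union_right V₂ hk₀⟩))
    (bbInclHom_conjNormal G _ hk₀) (bbInclHom_conjNormal G _ hk₀)

lemma semiconj_inl_conj :
    Semiconj (pushoutInl (bbInclHom G (Set.subset_union_right : K ⊆ V₁ ∪ K))
        (bbInclHom G (Set.subset_union_right : K ⊆ V₂ ∪ K)))
      (MulAut.conjNormal (PresentedGroup.of ⟨k₀, Set.mem_union_right V₁ hk₀⟩))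
      (conj G V₁ V₂ hk₀) := fun x =>
  (pushoutAut_inl _ _ _ _ _ x).symm

lemma semiconj_inr_conj :
    Semiconj (pushoutInr (bbInclHom G (Set.subset_union_right : K ⊆ V₁ ∪ K))
        (bbInclHom G (Set.subset_union_right : K ⊆ V₂ ∪ K)))
      (MulAut.conjNormal (PresentedGroup.of ⟨k₀, Set.mem_union_right V₂ hk₀⟩))
      (conj G V₁ V₂ hk₀) := fun x =>
  (pushoutAut_inr _ _ _ _ _ x).symm

abbrev Semidirect : Type _ :=
  BBAmalgam G K V₁ V₂ ⋊[zpowersHom _ (conj G V₁ V₂ hk₀)] Multiplicative ℤ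

def liftSide₁ : RAAG (G.induce (V₁ ∪ K)) →* Semidirect G V₁ V₂ hk₀ :=
  liftOfKer _ (bbHom_of _ _) _ (semiconj_inl_conj G V₁ V₂ hk₀)

def liftSide₂ : RAAG (G.induce (V₂ ∪ K)) →* Semidirect G V₁ V₂ hk₀ :=
  liftOfKer _ (bbHom_of _ _) _ (semiconj_inr_conj G V₁ V₂ hk₀)

lemma liftSide₁_of_eq_liftSide₂_of {v : V} (hv : v ∈ K) :
    liftSide₁ G V₁ V₂ hk₀ (PresentedGroup.of ⟨v, Set.mem_union_right V₁ hv⟩) =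
      liftSide₂ G V₁ V₂ hk₀ (PresentedGroup.of ⟨v, Set.mem_union_right V₂ hv⟩) := by
  have key {S : Set V} (h : K ⊆ S) :
      kerPart (bbHom_of _ ⟨k₀, h hk₀⟩) (PresentedGroup.of ⟨v, h hv⟩) =
        bbInclHom G h (kerPart (bbHom_of _ ⟨k₀, hk₀⟩) (PresentedGroup.of ⟨v, hv⟩)) :=
    Subtype.ext (by simp [Set.inclusion])
  simp only [liftSide₁, liftSide₂, liftOfKer_apply, bbHom_of]
  rw [key (Set.subset_union_right : K ⊆ V₁ ∪ K), key (Set.subset_union_right : K ⊆ V₂ ∪ K),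
    pushoutInl_apply, pushoutInr_apply]

variable {V₁ V₂} (hcover : Kᶜ ⊆ V₁ ∪ V₂)

open scoped Classical in
noncomputable def vertexImage (v : V) : Semidirect G V₁ V₂ hk₀ :=
  if h : v ∈ V₁ ∪ K then liftSide₁ G V₁ V₂ hk₀ (PresentedGroup.of ⟨v, h⟩)
  else liftSide₂ G V₁ V₂ hk₀ (PresentedGroup.of ⟨v, mem_union_of_notMem_union hcover h⟩)

lemma vertexImage_of_mem₁ {v : V} (h : v ∈ V₁ ∪ K) :
    vertexImage G hk₀ hcover v = liftSide₁ G V₁ V₂ hk₀ (PresentedGroup.of ⟨v, h⟩) :=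
  dif_pos h

lemma vertexImage_of_mem₂ (hdisj : Disjoint V₁ V₂) {v : V} (h : v ∈ V₂ ∪ K) :
    vertexImage G hk₀ hcover v = liftSide₂ G V₁ V₂ hk₀ (PresentedGroup.of ⟨v, h⟩) := by
  by_cases h₁ : v ∈ V₁ ∪ K
  · rw [vertexImage_of_mem₁ G hk₀ hcover h₁]
    exact liftSide₁_of_eq_liftSide₂_of G V₁ V₂ hk₀ (mem_of_mem_union_of_mem_union hdisj h₁ h)
  · exact dif_neg h₁

noncomputable def toSemidirect (hdisj : Disjoint V₁ V₂)
    (hnoedge : ∀ a ∈ V₁, ∀ b ∈ V₂, ¬ G.Adj a b) : RAAG G →* Semidirect G V₁ V₂ hk₀ :=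
  raagLift (vertexImage G hk₀ hcover) fun v w hvw => by
    rcases hvw.mem_sides hcover hnoedge with ⟨hv, hw⟩ | ⟨hv, hw⟩
    · rw [vertexImage_of_mem₁ G hk₀ hcover hv, vertexImage_of_mem₁ G hk₀ hcover hw]
      exact Commute.map (raag_commute (G := G.induce _) (v := ⟨v, hv⟩) (w := ⟨w, hw⟩) hvw) _
    · rw [vertexImage_of_mem₂ G hk₀ hcover hdisj hv, vertexImage_of_mem₂ G hk₀ hcover hdisj hw]
      exact Commute.map (raag_commute (G := G.induce _) (v := ⟨v, hv⟩) (w := ⟨w, hw⟩) hvw) _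

variable (hdisj : Disjoint V₁ V₂) (hnoedge : ∀ a ∈ V₁, ∀ b ∈ V₂, ¬ G.Adj a b)

lemma toSemidirect_raagMap₁ (g : RAAG (G.induce (V₁ ∪ K))) :
    toSemidirect G hk₀ hcover hdisj hnoedge (raagMap (Embedding.induce _).toHom g) =
      liftSide₁ G V₁ V₂ hk₀ g := by
  refine DFunLike.congr_fun (PresentedGroup.ext
    (φ := (toSemidirect G hk₀ hcover hdisj hnoedge).comp (raagMap (Embedding.induce _).toHom))
    fun x => ?_) g
  simp [toSemidirect, vertexImage_of_mem₁ G hk₀ hcover x.2]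

lemma toSemidirect_raagMap₂ (g : RAAG (G.induce (V₂ ∪ K))) :
    toSemidirect G hk₀ hcover hdisj hnoedge (raagMap (Embedding.induce _).toHom g) =
      liftSide₂ G V₁ V₂ hk₀ g := by
  refine DFunLike.congr_fun (PresentedGroup.ext
    (φ := (toSemidirect G hk₀ hcover hdisj hnoedge).comp (raagMap (Embedding.induce _).toHom))
    fun x => ?_) g
  simp [toSemidirect, vertexImage_of_mem₂ G hk₀ hcover hdisj x.2]

lemma rightHom_comp_toSemidirect :
    SemidirectProduct.rightHom.comp (toSemidirect G hk₀ hcover hdisj hnoedge) = bbHom G :=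
  PresentedGroup.ext fun v => by
    by_cases h : v ∈ V₁ ∪ K
    · simp [toSemidirect, vertexImage_of_mem₁ G hk₀ hcover h, liftSide₁]
    · simp [toSemidirect, vertexImage_of_mem₂ G hk₀ hcover hdisj
        (mem_union_of_notMem_union hcover h), liftSide₂]

noncomputable def ofKer : (bbHom G).ker →* BBAmalgam G K V₁ V₂ :=
  leftOnKer _ (rightHom_comp_toSemidirect G hk₀ hcover hdisj hnoedge)

variable (V₁ V₂ K) in
def toKer : BBAmalgam G K V₁ V₂ →* (bbHom G).ker :=
  pushoutLift (bbMap (Embedding.induce _).toHom) (bbMap (Embedding.induce _).toHom) <| by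
    ext x
    simp [raagMap_induce_inclHom]

lemma semiconj_toKer_conj :
    Semiconj ((bbHom G).ker.subtype.comp (toKer G K V₁ V₂)) (conj G V₁ V₂ hk₀)
      (MulAut.conj (PresentedGroup.of k₀)) := by
  have : ((bbHom G).ker.subtype.comp (toKer G K V₁ V₂)).comp (conj G V₁ V₂ hk₀).toMonoidHom =
      (MulAut.conj (PresentedGroup.of k₀)).toMonoidHom.comp
        ((bbHom G).ker.subtype.comp (toKer G K V₁ V₂)) :=
    pushout_hom_ext (fun x => by simp [conj, toKer, MulAut.conjNormal_apply])
      (fun x => by simp [conj, toKer, MulAut.conjNormal_apply])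
  exact DFunLike.congr_fun this

noncomputable def fromSemidirect : Semidirect G V₁ V₂ hk₀ →* RAAG G :=
  liftZPowers _ _ _ (semiconj_toKer_conj G hk₀)

lemma fromSemidirect_liftSide₁ (g : RAAG (G.induce (V₁ ∪ K))) :
    fromSemidirect G hk₀ (liftSide₁ G V₁ V₂ hk₀ g) = raagMap (Embedding.induce _).toHom g :=
  liftZPowers_liftOfKer _ _ _ _ _ _ _ _ (fun x => by simp [toKer]) (by simp) g

lemma fromSemidirect_liftSide₂ (g : RAAG (G.induce (V₂ ∪ K))) :
    fromSemidirect G hk₀ (liftSide₂ G V₁ V₂ hk₀ g) = raagMap (Embedding.induce _).toHom g :=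
  liftZPowers_liftOfKer _ _ _ _ _ _ _ _ (fun x => by simp [toKer]) (by simp) g

lemma fromSemidirect_comp_toSemidirect :
    (fromSemidirect G hk₀).comp (toSemidirect G hk₀ hcover hdisj hnoedge) = MonoidHom.id _ :=
  PresentedGroup.ext fun v => by
    by_cases h : v ∈ V₁ ∪ K
    · simp [toSemidirect, vertexImage_of_mem₁ G hk₀ hcover h, fromSemidirect_liftSide₁]
    · simp [toSemidirect, vertexImage_of_mem₂ G hk₀ hcover hdisj
        (mem_union_of_notMem_union hcover h), fromSemidirect_liftSide₂]

lemma ofKer_comp_toKer :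
    (ofKer G hk₀ hcover hdisj hnoedge).comp (toKer G K V₁ V₂) = MonoidHom.id _ :=
  pushout_hom_ext
    (fun x => by simp [ofKer, toKer, toSemidirect_raagMap₁, liftSide₁])
    (fun x => by simp [ofKer, toKer, toSemidirect_raagMap₂, liftSide₂])

lemma toKer_ofKer (x : (bbHom G).ker) :
    toKer G K V₁ V₂ (ofKer G hk₀ hcover hdisj hnoedge x) = x := by
  ext
  calc (toKer G K V₁ V₂ (ofKer G hk₀ hcover hdisj hnoedge x) : RAAG G)
      = fromSemidirect G hk₀ (SemidirectProduct.inl (ofKer G hk₀ hcover hdisj hnoedge x)) := by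
        simp [fromSemidirect]
    _ = x := by
      rw [ofKer, inl_leftOnKer, ← MonoidHom.comp_apply, fromSemidirect_comp_toSemidirect,
        MonoidHom.id_apply]

noncomputable def kerEquiv : (bbHom G).ker ≃* BBAmalgam G K V₁ V₂ :=
  MonoidHom.toMulEquiv (ofKer G hk₀ hcover hdisj hnoedge) (toKer G K V₁ V₂)
    (MonoidHom.ext (toKer_ofKer G hk₀ hcover hdisj hnoedge))
    (ofKer_comp_toKer G hk₀ hcover hdisj hnoedge)

end BBAmalgam

theorem bb_separating_clique_amalgam_general {V : Type*} (G : SimpleGraph V)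
    (K V₁ V₂ : Set V) (hKne : K.Nonempty) (hdisj : Disjoint V₁ V₂)
    (hcover : V₁ ∪ V₂ = Kᶜ)
    (hnoedge : ∀ a ∈ V₁, ∀ b ∈ V₂, ¬ G.Adj a b) :
    Nonempty ((bbHom G).ker ≃* Monoid.PushoutI (boolHoms
      (bbInclHom G (Set.subset_union_right : K ⊆ V₁ ∪ K))
      (bbInclHom G (Set.subset_union_right : K ⊆ V₂ ∪ K)))) := by
  obtain ⟨k₀, hk₀⟩ := hKne
  exact ⟨BBAmalgam.kerEquiv G hk₀ hcover.ge hdisj hnoedge⟩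

/-- If a finite connected simplicial graph `Γ` has a separating clique `K`, with
`Γ ∖ K = V₁ ⊔ V₂` nonempty and no edges between `V₁` and `V₂`, then the
Bestvina–Brady group `H_Γ` is the amalgamated product `H_{Γ₁} ∗_{H_K} H_{Γ₂}`,
i.e. the pushout of the diagram `H_{Γ₁} ← H_K → H_{Γ₂}` of the restrictions to
kernels of the homomorphisms induced by the inclusions of induced subgraphs, where
`Γᵢ` is induced on `Vᵢ ∪ K`. -/
theorem bb_separating_clique_amalgam {V : Type*} [Fintype V] (G : SimpleGraph V)
    (hconn : G.Connected) (K V₁ V₂ : Set V) (hKne : K.Nonempty) (hK : G.IsClique K)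
    (h1 : V₁.Nonempty) (h2 : V₂.Nonempty) (hdisj : Disjoint V₁ V₂)
    (hcover : V₁ ∪ V₂ = Kᶜ)
    (hnoedge : ∀ a ∈ V₁, ∀ b ∈ V₂, ¬ G.Adj a b) :
    Nonempty ((bbHom G).ker ≃* Monoid.PushoutI (boolHoms
      (bbInclHom G (Set.subset_union_right : K ⊆ V₁ ∪ K))
      (bbInclHom G (Set.subset_union_right : K ⊆ V₂ ∪ K)))) :=
  bb_separating_clique_amalgam_general G K V₁ V₂ hKne hdisj hcover hnoedge
end

section
/- Let Γ be a simplicial graph, let e = (u,v) and e' = (u',v') be edges of Γ such that u' and v' both lie in star(e). If the vertex set star(e) induces a clique in Γ and the vertex set star(e') induces a clique in Γ, then star(e) = star(e'). -/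
/-- The link of an edge `(u,v)`: the set of vertices adjacent to both `u` and `v`. -/
def edgeLink {V : Type*} (G : SimpleGraph V) (u v : V) : Set V :=
  {w | G.Adj u w ∧ G.Adj v w}

/-- The star of an edge `(u,v)`: its link together with the endpoints `u` and `v`. -/
def edgeStar {V : Type*} (G : SimpleGraph V) (u v : V) : Set V :=
  edgeLink G u v ∪ {u, v}

section

variable {V : Type*} {G : SimpleGraph V} {s : Set V} {u v : V}

lemma left_mem_edgeStar : u ∈ edgeStar G u v := Or.inr (Or.inl rfl)

lemma right_mem_edgeStar : v ∈ edgeStar G u v := Or.inr (Or.inr rfl)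

lemma SimpleGraph.IsClique.subset_edgeStar (hs : G.IsClique s) (hu : u ∈ s) (hv : v ∈ s) :
    s ⊆ edgeStar G u v := by
  intro w hw
  by_cases hwu : w = u
  · exact Or.inr (Or.inl hwu)
  by_cases hwv : w = v
  · exact Or.inr (Or.inr hwv)
  exact Or.inl ⟨hs hu hw (Ne.symm hwu), hs hv hw (Ne.symm hwv)⟩

end

theorem edgeStar_eq_of_isClique_general {V : Type*} (G : SimpleGraph V) (u v u' v' : V)
    (hu' : u' ∈ edgeStar G u v) (hv' : v' ∈ edgeStar G u v)
    (hclique : G.IsClique (edgeStar G u v)) (hclique' : G.IsClique (edgeStar G u' v')) :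
    edgeStar G u v = edgeStar G u' v' := by
  have hsub : edgeStar G u v ⊆ edgeStar G u' v' := hclique.subset_edgeStar hu' hv'
  exact hsub.antisymm <|
    hclique'.subset_edgeStar (hsub left_mem_edgeStar) (hsub right_mem_edgeStar)

/-- If `e = (u,v)` and `e' = (u',v')` are edges with both endpoints of `e'` in
`star(e)`, and both `star(e)` and `star(e')` induce cliques, then
`star(e) = star(e')`. -/
theorem edgeStar_eq_of_isClique {V : Type*} (G : SimpleGraph V) (u v u' v' : V)
    (he : G.Adj u v) (he' : G.Adj u' v')
    (hu' : u' ∈ edgeStar G u v) (hv' : v' ∈ edgeStar G u v)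
    (hclique : G.IsClique (edgeStar G u v)) (hclique' : G.IsClique (edgeStar G u' v')) :
    edgeStar G u v = edgeStar G u' v' :=
  edgeStar_eq_of_isClique_general G u v u' v' hu' hv' hclique hclique'
end

section
/- Let Γ be a finite simplicial graph with no induced cycles of length greater than or equal to 4. Let u and v be adjacent vertices of Γ, and let (u, x₁, …, x_k, v) with k ≥ 1 be a path in Γ whose internal vertices x₁, …, x_k are all distinct from u and v. Then some internal vertex x_i is adjacent to both u and v. -/
/-!
Close the path into the cycle `u, x₁, …, x_k, v, u`. A chord of this cycle other than `uv`
cuts out a stretch of the path, leaving a shorter path from `u` to `v` that still has an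
internal vertex, all of whose internal vertices are internal vertices of the original path;
so induction on the length applies. A cycle without such a chord is induced, hence has
length `3`: then `k = 1` and `x₁` is adjacent to both `u` and `v`.
-/

/-- A simple graph has no induced cycles of length `≥ 4` if there is no embedding of
the cycle graph on `n ≥ 4` vertices onto an induced subgraph (i.e. no family of `n`
distinct vertices whose only adjacencies are the consecutive ones along the cycle). -/
def NoLongInducedCycles {V : Type*} (G : SimpleGraph V) : Prop :=
  ¬ ∃ (n : ℕ) (_ : 4 ≤ n) (f : Fin n ↪ V),
      ∀ i j : Fin n, G.Adj (f i) (f j) ↔ (SimpleGraph.cycleGraph n).Adj i j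

namespace SimpleGraph

theorem cycleGraph_adj_of_lt {n : ℕ} {a b : Fin n} (hab : a < b) :
    (cycleGraph n).Adj a b ↔ b.val = a.val + 1 ∨ (a.val = 0 ∧ b.val + 1 = n) := by
  rw [cycleGraph_adj', Fin.coe_sub_iff_le.mpr hab.le, Fin.coe_sub_iff_lt.mpr hab]
  rw [Fin.lt_def] at hab
  omega

namespace Walk

variable {V : Type*} {G : SimpleGraph V} {u v : V}

def shortcut (p : G.Walk u v) {i j : ℕ} (h : G.Adj (p.getVert i) (p.getVert j)) :
    G.Walk u v :=
  (p.take i).append (cons h (p.drop j))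

variable {p : G.Walk u v} {i j : ℕ} (h : G.Adj (p.getVert i) (p.getVert j))

theorem support_shortcut (hj : j ≤ p.length) :
    (p.shortcut h).support = p.support.take (i + 1) ++ p.support.drop j := by
  simp [shortcut, support_append, support_take, min_eq_left hj]

theorem length_shortcut (hi : i ≤ p.length) :
    (p.shortcut h).length = i + 1 + (p.length - j) := by
  simp only [shortcut, length_append, length_cons, take_length, drop_length]
  omega

theorem support_shortcut_sublist (hij : i < j) (hj : j ≤ p.length) :
    (p.shortcut h).support.Sublist p.support := by
  rw [support_shortcut h hj]
  have := (List.take_sublist_take_left (l := p.support) hij).append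
    (List.Sublist.refl (p.support.drop j))
  rwa [List.take_append_drop] at this

theorem IsPath.shortcut (hp : p.IsPath) (hij : i < j) (hj : j ≤ p.length) :
    (p.shortcut h).IsPath :=
  IsPath.mk' (hp.support_nodup.sublist (support_shortcut_sublist h hij hj))

end Walk

end SimpleGraph

open SimpleGraph

theorem NoLongInducedCycles.exists_chord {V : Type*} {G : SimpleGraph V} {u v : V}
    (hG : NoLongInducedCycles G) {p : G.Walk u v} (hp : p.IsPath) (huv : G.Adj u v)
    (hlen : 3 ≤ p.length) :
    ∃ i j, i + 1 < j ∧ j ≤ p.length ∧ (i ≠ 0 ∨ j ≠ p.length) ∧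
      G.Adj (p.getVert i) (p.getVert j) := by
  by_contra! hchordless
  have hinj : Function.Injective fun k : Fin (p.length + 1) => p.getVert k :=
    fun a b hab => Fin.ext <|
      hp.getVert_injOn (Nat.le_of_lt_succ a.isLt) (Nat.le_of_lt_succ b.isLt) hab
  have hcycle {a b : Fin (p.length + 1)} (hab : a < b) :
      G.Adj (p.getVert a) (p.getVert b) ↔ (cycleGraph (p.length + 1)).Adj a b := by
    rw [cycleGraph_adj_of_lt hab]
    rw [Fin.lt_def] at hab
    refine ⟨fun hadj => ?_, ?_⟩
    · by_contra! hnot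
      exact hchordless a b (by omega) (by omega) (by omega) hadj
    · rintro (hb | ⟨ha, hb⟩)
      · rw [hb]
        exact p.adj_getVert_succ (by omega)
      · rwa [ha, show (b : ℕ) = p.length by omega, Walk.getVert_zero, Walk.getVert_length]
  refine hG ⟨p.length + 1, by omega, ⟨_, hinj⟩, fun a b => ?_⟩
  rcases lt_trichotomy a b with hab | rfl | hab
  · exact hcycle hab
  · simp
  · rw [G.adj_comm, (cycleGraph _).adj_comm]
    exact hcycle hab

theorem exists_internal_vertex_adj_both_general {V : Type*} (G : SimpleGraph V)
    (hG : NoLongInducedCycles G) (u v : V) (huv : G.Adj u v)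
    (p : G.Walk u v) (hp : p.IsPath) (hlen : 2 ≤ p.length) :
    ∃ x ∈ p.support, x ≠ u ∧ x ≠ v ∧ G.Adj u x ∧ G.Adj v x := by
  induction hn : p.length using Nat.strong_induction_on generalizing p with
  | _ n ih =>
  by_cases h3 : 3 ≤ p.length
  · obtain ⟨i, j, hij, hj, hends, hadj⟩ := hG.exists_chord hp huv h3
    have hlen_shortcut := Walk.length_shortcut hadj (by omega)
    obtain ⟨x, hx, hxu, hxv, hux, hvx⟩ :=
      ih _ (by omega) (p.shortcut hadj) (hp.shortcut hadj (by omega) hj) (by omega) rfl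
    exact ⟨x, (Walk.support_shortcut_sublist hadj (by omega) hj).subset hx, hxu, hxv, hux, hvx⟩
  · have hux : G.Adj u (p.getVert 1) := by simpa using p.adj_getVert_succ (i := 0) (by omega)
    have hxv : G.Adj (p.getVert 1) v := by
      have := p.adj_getVert_succ (i := 1) (by omega)
      rwa [show 1 + 1 = p.length by omega, Walk.getVert_length] at this
    exact ⟨p.getVert 1, p.getVert_mem_support 1, hux.ne', hxv.ne, hux, hxv.symm⟩

/-- In a finite simple graph with no induced cycles of length `≥ 4`, given adjacent
vertices `u, v` and a path from `u` to `v` with at least one internal vertex, some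
internal vertex of the path is adjacent to both `u` and `v`. -/
theorem exists_internal_vertex_adj_both {V : Type*} [Fintype V] (G : SimpleGraph V)
    (hG : NoLongInducedCycles G) (u v : V) (huv : G.Adj u v)
    (p : G.Walk u v) (hp : p.IsPath) (hlen : 2 ≤ p.length) :
    ∃ x ∈ p.support, x ≠ u ∧ x ≠ v ∧ G.Adj u x ∧ G.Adj v x :=
  exists_internal_vertex_adj_both_general G hG u v huv p hp hlen
end
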